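/- arXiv:2108.07054 — 5 statements merged into one kernel-verified Lean document; each statement's English description precedes it below -/
import Mathlib

section
/- Let A and B be m×m real symmetric matrices with B invertible, and suppose that A and B⁻¹ are in finite free position. Then det(xI − AB) = [det(xI − A) ⊠_m det(xI − B)] as polynomials in x. -/
open Polynomial Matrix

/-- The symmetric additive convolution of two polynomials of degree (at most) `m`:
`[p ⊞_m q](x) = (1/m!) ∑_{i=0}^m p^{(i)}(x) · q^{(m-i)}(0)`. -/
noncomputable def boxplus (m : ℕ) (p q : ℝ[X]) : ℝ[X] :=
  (m.factorial : ℝ)⁻¹ •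
    ∑ i ∈ Finset.range (m + 1),
      C ((Polynomial.derivative^[m - i] q).eval 0) * Polynomial.derivative^[i] p

/-- The symmetric multiplicative convolution of two degree-`m` polynomials
`p(x) = ∑ (-1)^i p_i x^{m-i}`, `q(x) = ∑ (-1)^i q_i x^{m-i}`:
`[p ⊠_m q](x) = ∑_{i=0}^m x^{m-i} (-1)^i p_i q_i / C(m,i)`, where
`p_i = (-1)^i · coeff p (m-i)`. -/
noncomputable def boxtimes (m : ℕ) (p q : ℝ[X]) : ℝ[X] :=
  ∑ i ∈ Finset.range (m + 1),
    C ((-1 : ℝ) ^ i * p.coeff (m - i) * q.coeff (m - i) / (m.choose i : ℝ)) *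
      (X : ℝ[X]) ^ (m - i)

/-- Two `m × m` real symmetric matrices `A`, `B` are in finite free position if
`det(xI - yA - zB) = [det(xI - yA) ⊞_m det(xI - zB)]` for all real `y, z`. -/
def FiniteFreePosition (m : ℕ) (A B : Matrix (Fin m) (Fin m) ℝ) : Prop :=
  ∀ y z : ℝ, (y • A + z • B).charpoly = boxplus m (y • A).charpoly (z • B).charpoly


/-!
Since `xI - AB = (x B⁻¹ - A) B`, the value of `det(xI - AB)` is `det B` times the value at `0`
of the characteristic polynomial of `A - x B⁻¹`, which finite free position expands through
`⊞_m`. At `0` only the coefficients of the two characteristic polynomials enter, and those of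
`-x B⁻¹` are, up to the factor `(-1)^m det B⁻¹` and powers of `x`, the coefficients of the
characteristic polynomial of `B` in reverse order; what remains is the defining sum of `⊠_m`.
-/

open scoped Ring Nat

namespace Matrix

variable {R n : Type*} [CommRing R] [Fintype n] [DecidableEq n]

theorem charpolyRev_smul (z : R) (M : Matrix n n R) :
    (z • M).charpolyRev = M.charpolyRev.comp (C z * X) := by
  rw [charpolyRev, charpolyRev, ← coe_compRingHom_apply, RingHom.map_det]
  congr 1
  ext i j : 1
  simp only [RingHom.mapMatrix_apply, map_apply, sub_apply, smul_apply, smul_eq_mul,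
    coe_compRingHom_apply, sub_comp, mul_comp, X_comp, C_comp, one_apply, C_mul]
  split_ifs <;> simp only [one_comp, zero_comp] <;> ring

theorem coeff_charpoly_eq_coeff_charpolyRev [Nontrivial R] (M : Matrix n n R) {k : ℕ}
    (hk : k ≤ Fintype.card n) :
    M.charpoly.coeff k = M.charpolyRev.coeff (Fintype.card n - k) := by
  rw [← reverse_charpoly, coeff_reverse, charpoly_natDegree_eq_dim, revAt_le (Nat.sub_le _ _),
    Nat.sub_sub_self hk]

theorem coeff_charpoly_smul (z : R) (M : Matrix n n R) {k : ℕ} (hk : k ≤ Fintype.card n) :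
    (z • M).charpoly.coeff k = z ^ (Fintype.card n - k) * M.charpoly.coeff k := by
  nontriviality R
  rw [coeff_charpoly_eq_coeff_charpolyRev _ hk, coeff_charpoly_eq_coeff_charpolyRev _ hk,
    charpolyRev_smul, comp_C_mul_X_coeff, mul_comm]

theorem coeff_charpoly_inv (B : Matrix n n R) (hB : IsUnit B) {k : ℕ} (hk : k ≤ Fintype.card n) :
    B⁻¹.charpoly.coeff k =
      (-1) ^ Fintype.card n * B.det⁻¹ʳ * B.charpoly.coeff (Fintype.card n - k) := by
  nontriviality R
  rw [charpoly_inv B hB, ← reverse_charpoly, ← C_1, ← C_neg, ← C_pow, ← C_mul, coeff_C_mul,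
    coeff_reverse, charpoly_natDegree_eq_dim, revAt_le hk]

theorem coeff_charpoly_smul_inv (z : R) (B : Matrix n n R) (hB : IsUnit B) {i : ℕ}
    (hi : i ≤ Fintype.card n) :
    (z • B⁻¹).charpoly.coeff (Fintype.card n - i) =
      (-1) ^ Fintype.card n * B.det⁻¹ʳ * z ^ i * B.charpoly.coeff i := by
  rw [coeff_charpoly_smul _ _ (Nat.sub_le _ _), coeff_charpoly_inv B hB (Nat.sub_le _ _),
    Nat.sub_sub_self hi]
  ring

theorem eval_charpoly_mul (A B : Matrix n n R) (hB : IsUnit B) (x : R) :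
    (A * B).charpoly.eval x = (A + (-x) • B⁻¹).charpoly.eval 0 * B.det := by
  have hBdet : IsUnit B.det := (isUnit_iff_isUnit_det B).mp hB
  rw [eval_charpoly, eval_charpoly, ← det_mul]
  congr 1
  rw [map_zero, zero_sub, neg_mul, add_mul, smul_mul, nonsing_inv_mul B hBdet, neg_add, neg_smul,
    neg_neg, scalar_apply, smul_one_eq_diagonal]
  abel

end Matrix

namespace Polynomial

theorem iterate_derivative_eval_zero {R : Type*} [Semiring R] (f : R[X]) (k : ℕ) :
    (derivative^[k] f).eval 0 = k ! * f.coeff k := by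
  rw [← coeff_zero_eq_eval_zero, coeff_iterate_derivative, zero_add, Nat.descFactorial_self,
    nsmul_eq_mul]

end Polynomial

theorem eval_zero_boxplus (m : ℕ) (p q : ℝ[X]) :
    (boxplus m p q).eval 0 =
      ∑ i ∈ Finset.range (m + 1), p.coeff i * q.coeff (m - i) / m.choose i := by
  rw [boxplus, eval_smul, eval_finsetSum, smul_eq_mul, Finset.mul_sum]
  refine Finset.sum_congr rfl fun i hi => ?_
  have hi : i ≤ m := Finset.mem_range_succ_iff.mp hi
  have hfact : (m.choose i : ℝ) * i ! * (m - i)! = m ! := by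
    exact_mod_cast Nat.choose_mul_factorial_mul_factorial hi
  have hchoose : (m.choose i : ℝ) ≠ 0 := by exact_mod_cast (Nat.choose_pos hi).ne'
  rw [eval_mul, eval_C, iterate_derivative_eval_zero, iterate_derivative_eval_zero, ← hfact]
  field_simp

theorem eval_boxtimes (m : ℕ) (p q : ℝ[X]) (x : ℝ) :
    (boxtimes m p q).eval x =
      ∑ i ∈ Finset.range (m + 1), (-1) ^ (m - i) * p.coeff i * q.coeff i / m.choose i * x ^ i := by
  rw [boxtimes, eval_finsetSum, ← Finset.sum_range_reflect]
  refine Finset.sum_congr rfl fun i hi => ?_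
  have hi : i ≤ m := Finset.mem_range_succ_iff.mp hi
  rw [Nat.add_sub_cancel, Nat.sub_sub_self hi, Nat.choose_symm hi, eval_mul, eval_C, eval_pow,
    eval_X]

theorem charpoly_mul_eq_boxtimes_general (m : ℕ) (A B : Matrix (Fin m) (Fin m) ℝ)
    (hBinv : IsUnit B)
    (h : FiniteFreePosition m A B⁻¹) :
    (A * B).charpoly = boxtimes m A.charpoly B.charpoly := by
  have hdet : B.det ≠ 0 := ((Matrix.isUnit_iff_isUnit_det B).mp hBinv).ne_zero
  refine Polynomial.funext fun x => ?_
  calc (A * B).charpoly.eval x = (A + (-x) • B⁻¹).charpoly.eval 0 * B.det :=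
        Matrix.eval_charpoly_mul A B hBinv x
    _ = (boxplus m A.charpoly ((-x) • B⁻¹).charpoly).eval 0 * B.det := by
        simpa only [one_smul] using congrArg (fun p => p.eval 0 * B.det) (h 1 (-x))
    _ = ∑ i ∈ Finset.range (m + 1), A.charpoly.coeff i *
          ((-1) ^ m * B.det⁻¹ * (-x) ^ i * B.charpoly.coeff i) / m.choose i * B.det := by
        rw [eval_zero_boxplus, Finset.sum_mul]
        refine Finset.sum_congr rfl fun i hi => ?_
        have hcoeff := Matrix.coeff_charpoly_smul_inv (-x) B hBinv (i := i) (by simpa using hi)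
        rw [Fintype.card_fin, Ring.inverse_eq_inv'] at hcoeff
        rw [hcoeff]
    _ = (boxtimes m A.charpoly B.charpoly).eval x := by
        rw [eval_boxtimes]
        refine Finset.sum_congr rfl fun i hi => ?_
        have hsign : (-1 : ℝ) ^ m = (-1) ^ (m - i) * (-1) ^ i := by
          rw [← pow_add, Nat.sub_add_cancel (Finset.mem_range_succ_iff.mp hi)]
        have hsq : (-1 : ℝ) ^ i * (-1) ^ i = 1 := by rw [← mul_pow, neg_one_mul, neg_neg, one_pow]
        rw [neg_pow x, hsign]
        linear_combination (-1) ^ (m - i) * A.charpoly.coeff i * B.charpoly.coeff i / m.choose i *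
          x ^ i * ((-1) ^ i * (-1) ^ i * inv_mul_cancel₀ hdet + hsq)

/-- **Finite free position with the inverse instantiates the multiplicative
convolution.** If `B` is invertible and `A` and `B⁻¹` are in finite free position, then
`det(xI - AB) = [det(xI - A) ⊠_m det(xI - B)]`. -/
theorem charpoly_mul_eq_boxtimes (m : ℕ) (A B : Matrix (Fin m) (Fin m) ℝ)
    (hA : A.IsSymm) (hB : B.IsSymm) (hBinv : IsUnit B)
    (h : FiniteFreePosition m A B⁻¹) :
    (A * B).charpoly = boxtimes m A.charpoly B.charpoly :=
  charpoly_mul_eq_boxtimes_general m A B hBinv h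
end

section
/- Let p and q be real polynomials of degree at most m, and let D denote the derivative operator on polynomials. Then for every nonnegative integer k, [D^k p ⊞_m q] = [p ⊞_m D^k q] = D^k [p ⊞_m q]. -/
/-!
`p ⊞_m q = (1/m!) ∑ᵢ q^{(m-i)}(0) · p^{(i)}` depends on `q` only through constants, so `D`
passes through to `p`. Moving one derivative from `p` to `q` shifts the summation index by one;
the two boundary terms contain `p^{(m+1)}` and `q^{(m+1)}`, which vanish by the degree bound.
-/

open Polynomial

section

variable {m : ℕ} (p q : ℝ[X])

theorem boxplus_derivative_left : boxplus m (derivative p) q = derivative (boxplus m p q) := by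
  unfold boxplus
  simp only [derivative_smul, derivative_sum, derivative_C_mul,
    ← Function.iterate_succ_apply, Function.iterate_succ_apply']

theorem boxplus_iterate_derivative_left (k : ℕ) :
    boxplus m (derivative^[k] p) q = derivative^[k] (boxplus m p q) := by
  induction k with
  | zero => rfl
  | succ k ih =>
    rw [Function.iterate_succ_apply', Function.iterate_succ_apply', boxplus_derivative_left, ih]

variable {p q}

theorem boxplus_derivative_comm (hp : p.natDegree ≤ m) (hq : q.natDegree ≤ m) :
    boxplus m (derivative p) q = boxplus m p (derivative q) := by
  have hp' : derivative^[m + 1] p = 0 := iterate_derivative_eq_zero (Nat.lt_succ_of_le hp)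
  have hq' : derivative^[m + 1] q = 0 := iterate_derivative_eq_zero (Nat.lt_succ_of_le hq)
  unfold boxplus
  congr 1
  rw [Finset.sum_range_succ, Finset.sum_range_succ']
  simp only [← Function.iterate_succ_apply, Nat.sub_zero, Nat.sub_self, hp', hq', mul_zero,
    eval_zero, map_zero, zero_mul, add_zero]
  refine Finset.sum_congr rfl fun i hi => ?_
  rw [show m - i = m - (i + 1) + 1 by grind]

theorem boxplus_iterate_derivative_right (hp : p.natDegree ≤ m) (hq : q.natDegree ≤ m) (k : ℕ) :
    boxplus m p (derivative^[k] q) = derivative^[k] (boxplus m p q) := by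
  induction k with
  | zero => rfl
  | succ k ih =>
    have hqk : (derivative^[k] q).natDegree ≤ m :=
      (natDegree_iterate_derivative q k).trans (tsub_le_self.trans hq)
    rw [Function.iterate_succ_apply', ← boxplus_derivative_comm hp hqk,
      boxplus_derivative_left, ih, Function.iterate_succ_apply']

end

/-- **Derivatives commute with the additive convolution.** For real polynomials `p`, `q`
of degree at most `m` and any `k`,
`[D^k p ⊞_m q] = [p ⊞_m D^k q] = D^k [p ⊞_m q]`. -/
theorem boxplus_iterate_derivative (m : ℕ) (p q : ℝ[X])
    (hp : p.natDegree ≤ m) (hq : q.natDegree ≤ m) (k : ℕ) :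
    boxplus m (Polynomial.derivative^[k] p) q =
        boxplus m p (Polynomial.derivative^[k] q) ∧
      boxplus m p (Polynomial.derivative^[k] q) =
        Polynomial.derivative^[k] (boxplus m p q) := by
  have hright := boxplus_iterate_derivative_right hp hq k
  exact ⟨(boxplus_iterate_derivative_left p q k).trans hright.symm, hright⟩
end

section
/- For all real polynomials p, q, r of degree at most m, the symmetric additive convolution is associative: [p ⊞_m [q ⊞_m r]] = [[p ⊞_m q] ⊞_m r]. -/
open Polynomial

/-!
With `D` the derivative and `σ_m q = (1/m!) ∑_{i ≤ m} q^{(m-i)}(0) X^i`, the convolution is the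
differential operator `p ⊞_m q = σ_m(q)(D) p`. Operators that agree modulo `X^{m+1}` agree on
polynomials of degree at most `m`, and since `T(D)` commutes with `D`, a one-line coefficient
computation gives `σ_m(T(D) q) ≡ T · σ_m(q) mod X^{m+1}` whenever `deg q ≤ m`. Hence
`p ⊞ (q ⊞ r) = (σ_m(r) · σ_m(q))(D) p = σ_m(r)(D) (σ_m(q)(D) p) = (p ⊞ q) ⊞ r`.
-/

open Finset

namespace Polynomial

variable {R : Type*} [CommSemiring R]

theorem aeval_derivative_eq_sum_range {f : R[X]} {n : ℕ} (hf : f.natDegree ≤ n) (S : R[X]) :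
    aeval derivative S f = ∑ i ∈ range (n + 1), S.coeff i • derivative^[i] f := by
  induction S using Polynomial.induction_on' with
  | add S T hS hT =>
    simp only [map_add, LinearMap.add_apply, hS, hT, coeff_add, add_smul, sum_add_distrib]
  | monomial k c =>
    simp only [aeval_monomial, coeff_monomial, ite_smul, zero_smul, sum_ite_eq, mem_range]
    rw [Module.End.mul_apply, Module.algebraMap_end_apply, Module.End.pow_apply]
    split_ifs with hk
    · rfl
    · rw [iterate_derivative_eq_zero (by omega), smul_zero]

theorem aeval_derivative_congr {f : R[X]} {n : ℕ} (hf : f.natDegree ≤ n) {S T : R[X]}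
    (h : ∀ i ≤ n, S.coeff i = T.coeff i) :
    aeval derivative S f = aeval derivative T f := by
  rw [aeval_derivative_eq_sum_range hf, aeval_derivative_eq_sum_range hf]
  exact sum_congr rfl fun i hi => by rw [h i (Nat.lt_succ_iff.mp (mem_range.mp hi))]

theorem iterate_derivative_aeval_derivative (n : ℕ) (S f : R[X]) :
    derivative^[n] (aeval derivative S f) = aeval derivative S (derivative^[n] f) := by
  rw [← Module.End.pow_apply, ← Module.End.pow_apply, ← Module.End.mul_apply,
    ← Module.End.mul_apply, ← aeval_X_pow (R := R) (x := (derivative : Module.End R R[X])),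
    ← map_mul, ← map_mul, mul_comm]

end Polynomial

section Field

variable {K : Type*} [Field K]

noncomputable def boxplusSymbol (m : ℕ) (q : K[X]) : K[X] :=
  ∑ i ∈ range (m + 1), monomial i ((m.factorial : K)⁻¹ * (derivative^[m - i] q).eval 0)

theorem coeff_boxplusSymbol {m k : ℕ} (hk : k ≤ m) (q : K[X]) :
    (boxplusSymbol m q).coeff k = (m.factorial : K)⁻¹ * (derivative^[m - k] q).eval 0 := by
  simp only [boxplusSymbol, finsetSum_coeff, coeff_monomial, sum_ite_eq', mem_range,
    Nat.lt_succ_iff.mpr hk, if_true]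

theorem coeff_boxplusSymbol_aeval_derivative {m k : ℕ} (hk : k ≤ m) (T : K[X]) {q : K[X]}
    (hq : q.natDegree ≤ m) :
    (boxplusSymbol m (aeval derivative T q)).coeff k = (T * boxplusSymbol m q).coeff k := by
  have hdeg : (derivative^[m - k] q).natDegree ≤ k :=
    (natDegree_iterate_derivative q _).trans (by omega)
  rw [coeff_boxplusSymbol hk, iterate_derivative_aeval_derivative,
    aeval_derivative_eq_sum_range hdeg, eval_finsetSum, mul_sum, coeff_mul,
    Nat.sum_antidiagonal_eq_sum_range_succ (fun i j => T.coeff i * (boxplusSymbol m q).coeff j)]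
  refine sum_congr rfl fun i hi => ?_
  have hik : i ≤ k := Nat.lt_succ_iff.mp (mem_range.mp hi)
  rw [coeff_boxplusSymbol (by omega), eval_smul, ← Function.iterate_add_apply,
    show i + (m - k) = m - (k - i) by omega, smul_eq_mul]
  ring

end Field

theorem boxplus_eq_aeval_boxplusSymbol (m : ℕ) (p q : ℝ[X]) :
    boxplus m p q = aeval derivative (boxplusSymbol m q) p := by
  simp only [boxplus, boxplusSymbol, map_sum, aeval_monomial, LinearMap.sum_apply, smul_sum]
  refine sum_congr rfl fun i _ => ?_
  rw [Module.End.mul_apply, Module.algebraMap_end_apply, Module.End.pow_apply, mul_smul,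
    ← smul_eq_C_mul]

theorem boxplus_assoc_general (m : ℕ) (p q r : ℝ[X])
    (hp : p.natDegree ≤ m) (hq : q.natDegree ≤ m) :
    boxplus m p (boxplus m q r) = boxplus m (boxplus m p q) r := by
  simp only [boxplus_eq_aeval_boxplusSymbol]
  calc aeval derivative (boxplusSymbol m (aeval derivative (boxplusSymbol m r) q)) p
      = aeval derivative (boxplusSymbol m r * boxplusSymbol m q) p :=
        aeval_derivative_congr hp fun k hk => coeff_boxplusSymbol_aeval_derivative hk _ hq
    _ = aeval derivative (boxplusSymbol m r) (aeval derivative (boxplusSymbol m q) p) := by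
        rw [map_mul, Module.End.mul_apply]

/-- **Associativity of the symmetric additive convolution** on polynomials of degree at
most `m`: `[p ⊞_m [q ⊞_m r]] = [[p ⊞_m q] ⊞_m r]`. -/
theorem boxplus_assoc (m : ℕ) (p q r : ℝ[X])
    (hp : p.natDegree ≤ m) (hq : q.natDegree ≤ m) (hr : r.natDegree ≤ m) :
    boxplus m p (boxplus m q r) = boxplus m (boxplus m p q) r :=
  boxplus_assoc_general m p q r hp hq
end

section
/- (Finite free law of large numbers.) Let μ and C be real numbers, and let p_1, p_2, … be a sequence of monic real polynomials, each of degree m with all roots real, such that for every i the sum of the roots of p_i equals mμ and the sum of the squares of the roots of p_i is at most mC. For each positive integer n and each 1 ≤ i ≤ n let q_{i,n}(x) = n^{−m} p_i(nx), and set r_n = [q_{1,n} ⊞_m q_{2,n} ⊞_m ⋯ ⊞_m q_{n,n}]. Then r_n converges coefficientwise to (x − μ)^m as n → ∞: for each 0 ≤ j ≤ m, the coefficient of x^j in r_n converges to the coefficient of x^j in (x − μ)^m. -/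
open Polynomial

/-- The iterated symmetric additive convolution of a list of polynomials
(`x^m` is the identity element for `⊞_m` on monic degree-`m` polynomials). -/
noncomputable def boxplusList (m : ℕ) (l : List ℝ[X]) : ℝ[X] :=
  l.foldr (boxplus m) ((X : ℝ[X]) ^ m)

/-! Write `p = ∑ (-1)^k a_k X^(m-k)` and `â_k(p) = a_k (m-k)!/m!`. Then `â(p ⊞_m q)` is the
convolution of `â(p)` and `â(q)`, so the `â_k(r_n)` (`k ≤ m`) are low coefficients of a product of
`n` polynomials `∑ â_k(q_{i,n}) X^k = ∑ â_k(p_i) (X/n)^k`. Here `â_0 = 1`, `â_1 = μ`, and the roots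
are bounded by `√(mC)`, so every factor is `1 + μX/n + O(1/n²)` in the ℓ¹ norm of the first `m + 1`
coefficients. That norm is submultiplicative, so the product is within `O(1/n)` of
`(1 + μX/n)^n`, whose coefficients tend to `μ^k/k!`; and `μ^k/k! = â_k((X - μ)^m)`. -/

open Finset Filter

lemma Multiset.abs_le_sqrt_sum_sq {s : Multiset ℝ} {r : ℝ} (hr : r ∈ s) :
    |r| ≤ √((s.map (· ^ 2)).sum) := by
  rw [← Real.sqrt_sq_eq_abs]
  refine Real.sqrt_le_sqrt <|
    Multiset.single_le_sum (fun x hx => ?_) _ (Multiset.mem_map_of_mem _ hr)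
  obtain ⟨y, _, rfl⟩ := Multiset.mem_map.1 hx
  positivity

namespace Polynomial

section truncNorm

noncomputable def truncNorm (N : ℕ) (f : ℝ[X]) : ℝ := ∑ i ∈ range N, |f.coeff i|

variable {N : ℕ}

lemma truncNorm_nonneg (f : ℝ[X]) : 0 ≤ truncNorm N f :=
  sum_nonneg fun _ _ => abs_nonneg _

lemma abs_coeff_le_truncNorm (f : ℝ[X]) {k : ℕ} (hk : k < N) : |f.coeff k| ≤ truncNorm N f :=
  single_le_sum (f := fun i => |f.coeff i|) (fun _ _ => abs_nonneg _) (mem_range.2 hk)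

lemma truncNorm_add_le (f g : ℝ[X]) : truncNorm N (f + g) ≤ truncNorm N f + truncNorm N g := by
  rw [truncNorm, truncNorm, truncNorm, ← sum_add_distrib]
  exact sum_le_sum fun i _ => by rw [coeff_add]; exact abs_add_le _ _

lemma truncNorm_sub_le (f g : ℝ[X]) : truncNorm N (f - g) ≤ truncNorm N f + truncNorm N g := by
  rw [truncNorm, truncNorm, truncNorm, ← sum_add_distrib]
  exact sum_le_sum fun i _ => by rw [coeff_sub]; exact abs_sub _ _

lemma truncNorm_monomial_le (k : ℕ) (a : ℝ) : truncNorm N (monomial k a) ≤ |a| := by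
  simp only [truncNorm, coeff_monomial, apply_ite, abs_zero, sum_ite_eq, mem_range]
  split_ifs <;> simp

lemma truncNorm_mul_le (f g : ℝ[X]) : truncNorm N (f * g) ≤ truncNorm N f * truncNorm N g := by
  calc truncNorm N (f * g)
      ≤ ∑ k ∈ range N, ∑ i ∈ range (k + 1), |f.coeff i| * |g.coeff (k - i)| := by
        refine sum_le_sum fun k _ => ?_
        rw [coeff_mul, Nat.sum_antidiagonal_eq_sum_range_succ_mk]
        simpa only [abs_mul] using abs_sum_le_sum_abs (fun i => f.coeff i * g.coeff (k - i)) _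
    _ = ∑ i ∈ range N, ∑ j ∈ range (N - i), |f.coeff i| * |g.coeff j| :=
        sum_range_diag_flip N fun i j => |f.coeff i| * |g.coeff j|
    _ ≤ ∑ i ∈ range N, ∑ j ∈ range N, |f.coeff i| * |g.coeff j| :=
        sum_le_sum fun i _ => sum_le_sum_of_subset_of_nonneg
          (range_subset_range.2 (Nat.sub_le N i)) fun _ _ _ => by positivity
    _ = truncNorm N f * truncNorm N g := (sum_mul_sum _ _ _ _).symm

lemma truncNorm_list_prod_le {l : List ℝ[X]} {M : ℝ} (h : ∀ g ∈ l, truncNorm N g ≤ M) :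
    truncNorm N l.prod ≤ M ^ l.length := by
  induction l with
  | nil => simpa [← C_1, ← monomial_zero_left] using truncNorm_monomial_le (N := N) 0 1
  | cons g t ih =>
    have hg := h g List.mem_cons_self
    rw [List.prod_cons, List.length_cons, pow_succ']
    exact (truncNorm_mul_le _ _).trans <| mul_le_mul hg
      (ih fun g' hg' => h g' (List.mem_cons_of_mem _ hg')) (truncNorm_nonneg _)
      ((truncNorm_nonneg _).trans hg)

lemma truncNorm_list_prod_sub_pow_le {l : List ℝ[X]} {L : ℝ[X]} {M e : ℝ}
    (hL : truncNorm N L ≤ M) (hg : ∀ g ∈ l, truncNorm N g ≤ M)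
    (he : ∀ g ∈ l, truncNorm N (g - L) ≤ e) :
    truncNorm N (l.prod - L ^ l.length) ≤ l.length * e * M ^ (l.length - 1) := by
  have hM : 0 ≤ M := (truncNorm_nonneg _).trans hL
  induction l with
  | nil => simp [truncNorm]
  | cons g t ih =>
    have hg' : ∀ g' ∈ t, truncNorm N g' ≤ M := fun g' h => hg g' (List.mem_cons_of_mem _ h)
    have he' : ∀ g' ∈ t, truncNorm N (g' - L) ≤ e := fun g' h => he g' (List.mem_cons_of_mem _ h)
    have he0 : 0 ≤ e := (truncNorm_nonneg _).trans (he g List.mem_cons_self)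
    rw [List.prod_cons, List.length_cons, pow_succ',
      show g * t.prod - L * L ^ t.length = (g - L) * t.prod + L * (t.prod - L ^ t.length) by ring]
    calc _ ≤ e * M ^ t.length + M * (t.length * e * M ^ (t.length - 1)) :=
          (truncNorm_add_le _ _).trans <| add_le_add
            ((truncNorm_mul_le _ _).trans <| mul_le_mul (he g List.mem_cons_self)
              (truncNorm_list_prod_le hg') (truncNorm_nonneg _) he0)
            ((truncNorm_mul_le _ _).trans <| mul_le_mul hL (ih hg' he') (truncNorm_nonneg _) hM)
      _ = (t.length + 1 : ℕ) * e * M ^ (t.length + 1 - 1) := by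
          rcases t.length with _ | n
          · simp
          · simp only [Nat.add_sub_cancel]; push_cast; ring

lemma truncNorm_X_sub_C_le (r : ℝ) : truncNorm N (X - C r) ≤ 1 + |r| := by
  rw [← monomial_one_one_eq_X, ← monomial_zero_left]
  simpa using (truncNorm_sub_le _ _).trans
    (add_le_add (truncNorm_monomial_le (N := N) 1 1) (truncNorm_monomial_le 0 r))

lemma truncNorm_le_of_abs_roots_le {p : ℝ[X]} {R : ℝ} (hmon : p.Monic) (hsplit : p.Splits)
    (hR : ∀ r ∈ p.roots, |r| ≤ R) : truncNorm N p ≤ (1 + R) ^ p.natDegree := by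
  have hprod := truncNorm_list_prod_le (N := N) (l := (p.roots.map (X - C ·)).toList)
    (M := 1 + R) fun g hg => by
      obtain ⟨r, hr, rfl⟩ := Multiset.mem_map.1 (Multiset.mem_toList.1 hg)
      exact (truncNorm_X_sub_C_le r).trans (by linarith [hR r hr])
  rwa [Multiset.prod_toList, Multiset.length_toList, Multiset.card_map,
    ← hsplit.eq_prod_roots_of_monic hmon, splits_iff_card_roots.1 hsplit] at hprod

lemma truncNorm_one_add_C_mul_X_le (a : ℝ) : truncNorm N (1 + C a * X) ≤ 1 + |a| := by
  rw [← C_1, ← monomial_zero_left, C_mul_X_eq_monomial]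
  simpa using (truncNorm_add_le _ _).trans
    (add_le_add (truncNorm_monomial_le (N := N) 0 1) (truncNorm_monomial_le 1 a))

lemma tendsto_coeff_one_add_C_div_mul_X_pow (μ : ℝ) (k : ℕ) :
    Tendsto (fun n : ℕ => ((1 + C (μ / n) * X) ^ n).coeff k) atTop
      (nhds (μ ^ k / k.factorial)) := by
  have hcoeff (n : ℕ) : ((1 + C (μ / n) * X) ^ n).coeff k = n.choose k * (μ / n) ^ k := by
    rw [show (1 + C (μ / n) * X) ^ n = ((1 + X) ^ n).comp (C (μ / n) * X) by simp,
      comp_C_mul_X_coeff, coeff_one_add_X_pow]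
  simp_rw [hcoeff]
  refine ProbabilityTheory.tendsto_choose_mul_pow_atTop k (tendsto_const_nhds.congr' ?_)
  filter_upwards [eventually_ne_atTop 0] with n hn
  field_simp

lemma abs_coeff_list_prod_sub_pow_le {g : ℕ → ℝ[X]} {μ E : ℝ} {n k : ℕ} (hn : 1 ≤ n)
    (hg : ∀ i, truncNorm N (g i - (1 + C (μ / n) * X)) ≤ E / n ^ 2) (hk : k < N) :
    |((List.range n).map g).prod.coeff k - ((1 + C (μ / n) * X) ^ n).coeff k| ≤
      E * Real.exp (|μ| + E) / n := by
  have hn' : (1 : ℝ) ≤ n := by exact_mod_cast hn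
  have hE : 0 ≤ E := by
    simpa using (le_div_iff₀ (by positivity)).1 ((truncNorm_nonneg _).trans (hg 0))
  set K := |μ| + E with hK
  set L := 1 + C (μ / n) * X
  set M := 1 + K / n with hM
  have hLM : truncNorm N L ≤ M := by
    refine (truncNorm_one_add_C_mul_X_le _).trans ?_
    rw [abs_div, Nat.abs_cast, hM, hK, add_div]
    linarith [div_nonneg hE n.cast_nonneg]
  have hEn : E / n ^ 2 ≤ E / n := div_le_div_of_nonneg_left hE (by positivity) (by nlinarith)
  have hgM : ∀ i, truncNorm N (g i) ≤ M := fun i => calc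
    truncNorm N (g i) ≤ truncNorm N (g i - L) + truncNorm N L := by
        simpa using truncNorm_add_le (N := N) (g i - L) L
    _ ≤ E / n + (1 + |μ| / n) := by
        gcongr
        · exact (hg i).trans hEn
        · simpa [abs_div] using truncNorm_one_add_C_mul_X_le (N := N) (μ / n)
    _ = M := by rw [hM, hK]; ring
  have hprod := truncNorm_list_prod_sub_pow_le (l := (List.range n).map g) hLM
    (by simpa using fun i _ => hgM i) (by simpa using fun i _ => hg i)
  rw [List.length_map, List.length_range] at hprod
  have hMexp : M ^ n ≤ Real.exp K := by
    have h := Real.one_sub_div_pow_le_exp_neg (n := n) (t := -K) (by linarith [abs_nonneg μ])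
    rwa [neg_div, sub_neg_eq_add, neg_neg] at h
  calc _ = |(((List.range n).map g).prod - L ^ n).coeff k| := by rw [coeff_sub]
    _ ≤ n * (E / n ^ 2) * M ^ (n - 1) := (abs_coeff_le_truncNorm _ hk).trans hprod
    _ ≤ n * (E / n ^ 2) * M ^ n := by
        gcongr
        · exact le_add_of_nonneg_right (by positivity)
        · omega
    _ ≤ n * (E / n ^ 2) * Real.exp K := by gcongr
    _ = E * Real.exp K / n := by field_simp

theorem tendsto_coeff_list_prod_of_truncNorm_sub_le {g : ℕ → ℕ → ℝ[X]} {μ E : ℝ}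
    (hg : ∀ n : ℕ, 1 ≤ n → ∀ i, truncNorm N (g n i - (1 + C (μ / n) * X)) ≤ E / n ^ 2)
    {k : ℕ} (hk : k < N) :
    Tendsto (fun n => ((List.range n).map (g n)).prod.coeff k) atTop
      (nhds (μ ^ k / k.factorial)) := by
  have herr : ∀ᶠ n : ℕ in atTop,
      ‖((List.range n).map (g n)).prod.coeff k - ((1 + C (μ / n) * X) ^ n).coeff k‖ ≤
        E * Real.exp (|μ| + E) / n :=
    eventually_atTop.2 ⟨1, fun n hn => abs_coeff_list_prod_sub_pow_le hn (hg n hn) hk⟩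
  simpa using (tendsto_coeff_one_add_C_div_mul_X_pow μ k).add <|
    squeeze_zero_norm' herr (tendsto_const_div_atTop_nhds_zero_nat _)

end truncNorm

section scaledCoeff

/-- With `f = ∑ (-1)^k a_k X^(m-k)`, this is `â_k(f) = a_k (m-k)!/m!`. -/
noncomputable def scaledCoeff (m : ℕ) (f : ℝ[X]) (k : ℕ) : ℝ :=
  (-1) ^ k * (m - k).factorial / m.factorial * f.coeff (m - k)

noncomputable def scaledPoly (m : ℕ) (f : ℝ[X]) : ℝ[X] :=
  ∑ k ∈ range (m + 1), C (scaledCoeff m f k) * X ^ k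

variable {m : ℕ}

lemma coeff_scaledPoly (f : ℝ[X]) {k : ℕ} (hk : k ≤ m) :
    (scaledPoly m f).coeff k = scaledCoeff m f k := by
  simp [scaledPoly, hk]

lemma coeff_eq_scaledCoeff (f : ℝ[X]) {j : ℕ} (hj : j ≤ m) :
    f.coeff j = (-1) ^ (m - j) * m.factorial / j.factorial * scaledCoeff m f (m - j) := by
  have hsign : ((-1 : ℝ) ^ (m - j)) ^ 2 = 1 := by
    rw [← pow_mul, (even_two.mul_left (m - j)).neg_one_pow]
  rw [scaledCoeff, Nat.sub_sub_self hj]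
  field_simp
  linear_combination (-f.coeff j) * hsign

lemma scaledCoeff_boxplus {p : ℝ[X]} (q : ℝ[X]) (hp : p.natDegree ≤ m) {k : ℕ} (hk : k ≤ m) :
    scaledCoeff m (boxplus m p q) k =
      ∑ x ∈ antidiagonal k, scaledCoeff m p x.1 * scaledCoeff m q x.2 := by
  rw [← Nat.sum_antidiagonal_swap, Nat.sum_antidiagonal_eq_sum_range_succ_mk]
  simp only [Prod.fst_swap, Prod.snd_swap]
  unfold scaledCoeff boxplus
  rw [coeff_smul, finsetSum_coeff, ← sum_subset (range_subset_range.2 (by omega : k + 1 ≤ m + 1))]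
  swap
  · intro i hi hik
    simp only [mem_range] at hi hik
    rw [coeff_C_mul, coeff_iterate_derivative, coeff_eq_zero_of_natDegree_lt (by omega)]
    simp
  rw [smul_eq_mul, mul_sum, mul_sum]
  refine sum_congr rfl fun i hi => ?_
  have hik : i ≤ k := Nat.lt_succ_iff.1 (mem_range.1 hi)
  rw [coeff_C_mul, coeff_iterate_derivative, ← coeff_zero_eq_eval_zero, coeff_iterate_derivative,
    zero_add, Nat.descFactorial_self, show m - (k - i) = m - k + i by omega]
  have hfac : ((m - k).factorial : ℝ) * (m - k + i).descFactorial i = (m - k + i).factorial := by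
    have h := Nat.factorial_mul_descFactorial (show i ≤ m - k + i by omega)
    rw [Nat.add_sub_cancel] at h
    exact_mod_cast h
  have hsign : (-1 : ℝ) ^ i * (-1) ^ (k - i) = (-1) ^ k := by
    rw [← pow_add, Nat.add_sub_cancel' hik]
  push_cast [nsmul_eq_mul]
  rw [← hsign, ← hfac]
  ring

lemma scaledCoeff_boxplusList {l : List ℝ[X]} (hl : ∀ f ∈ l, f.natDegree ≤ m) {k : ℕ}
    (hk : k ≤ m) : scaledCoeff m (boxplusList m l) k = (l.map (scaledPoly m)).prod.coeff k := by
  induction l generalizing k with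
  | nil =>
    rcases k with _ | k
    · simp [boxplusList, scaledCoeff, m.factorial_ne_zero]
    · simp [boxplusList, scaledCoeff, coeff_X_pow, coeff_one, show m - (k + 1) ≠ m by omega]
  | cons f t ih =>
    have ht : ∀ g ∈ t, g.natDegree ≤ m := fun g hg => hl g (List.mem_cons_of_mem f hg)
    change scaledCoeff m (boxplus m f (boxplusList m t)) k = _
    rw [scaledCoeff_boxplus _ (hl f List.mem_cons_self) hk, List.map_cons, List.prod_cons,
      coeff_mul]
    refine sum_congr rfl fun x hx => ?_
    have hx' := mem_antidiagonal.1 hx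
    rw [coeff_scaledPoly f (by omega), ih ht (by omega)]

lemma scaledCoeff_C_inv_pow_mul_comp (p : ℝ[X]) {c : ℝ} (hc : c ≠ 0) {k : ℕ} (hk : k ≤ m) :
    scaledCoeff m (C (c ^ m)⁻¹ * p.comp (C c * X)) k = scaledCoeff m p k / c ^ k := by
  rw [scaledCoeff, scaledCoeff, coeff_C_mul, comp_C_mul_X_coeff,
    show c ^ m = c ^ (m - k) * c ^ k by rw [← pow_add, Nat.sub_add_cancel hk]]
  field_simp

lemma natDegree_C_mul_comp_C_mul_X_le {p : ℝ[X]} (a c : ℝ) (hp : p.natDegree ≤ m) :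
    (C a * p.comp (C c * X)).natDegree ≤ m :=
  (natDegree_C_mul_le _ _).trans <| natDegree_comp_le.trans <|
    (Nat.mul_le_mul hp ((natDegree_C_mul_le _ _).trans natDegree_X_le)).trans_eq (mul_one m)

lemma abs_scaledCoeff_le (f : ℝ[X]) (k : ℕ) : |scaledCoeff m f k| ≤ |f.coeff (m - k)| := by
  have hfac : ((m - k).factorial : ℝ) / m.factorial ≤ 1 :=
    div_le_one_of_le₀ (by exact_mod_cast Nat.factorial_le (Nat.sub_le m k)) (by positivity)
  rw [scaledCoeff, abs_mul, mul_div_assoc, abs_mul, abs_pow, abs_neg, abs_one, one_pow, one_mul,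
    abs_of_nonneg (by positivity)]
  exact mul_le_of_le_one_left (abs_nonneg _) hfac

lemma Monic.scaledCoeff_zero {p : ℝ[X]} (hmon : p.Monic) (hdeg : p.natDegree = m) :
    scaledCoeff m p 0 = 1 := by
  simp [scaledCoeff, ← hdeg, hmon.coeff_natDegree, Nat.factorial_ne_zero]

lemma Splits.scaledCoeff_one {p : ℝ[X]} (hsplit : p.Splits) (hmon : p.Monic)
    (hdeg : p.natDegree = m) (hm : 0 < m) : scaledCoeff m p 1 = p.roots.sum / m := by
  have hnext := hsplit.nextCoeff_eq_neg_sum_roots_of_monic hmon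
  rw [nextCoeff_of_natDegree_pos (hdeg ▸ hm), hdeg] at hnext
  have hfac : (m : ℝ) * (m - 1).factorial = m.factorial := by
    exact_mod_cast Nat.mul_factorial_pred hm.ne'
  rw [scaledCoeff, hnext, ← hfac]
  have : (m : ℝ) ≠ 0 := by exact_mod_cast hm.ne'
  field_simp

lemma scaledCoeff_X_sub_C_pow (μ : ℝ) {k : ℕ} (hk : k ≤ m) :
    scaledCoeff m ((X - C μ) ^ m) k = μ ^ k / k.factorial := by
  rw [scaledCoeff, sub_eq_add_neg, ← C_neg, coeff_X_add_C_pow, Nat.sub_sub_self hk,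
    Nat.cast_choose ℝ (Nat.sub_le m k), Nat.sub_sub_self hk]
  field_simp
  rw [← mul_pow, neg_one_mul, neg_neg]

lemma truncNorm_scaledPoly_rescale_sub_le {p : ℝ[X]} {μ D c : ℝ} (h0 : scaledCoeff m p 0 = 1)
    (h1 : 0 < m → scaledCoeff m p 1 = μ) (hD : ∀ k ≤ m, |scaledCoeff m p k| ≤ D) (hc : 1 ≤ c) :
    truncNorm (m + 1) (scaledPoly m (C (c ^ m)⁻¹ * p.comp (C c * X)) - (1 + C (μ / c) * X)) ≤
      (m + 1) * D / c ^ 2 := by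
  have hcpos : 0 < c := by linarith
  have hD0 : 0 ≤ D / c ^ 2 := div_nonneg ((abs_nonneg _).trans (hD 0 (Nat.zero_le m))) (sq_nonneg c)
  have hterm : ∀ t ∈ range (m + 1),
      |(scaledPoly m (C (c ^ m)⁻¹ * p.comp (C c * X)) - (1 + C (μ / c) * X)).coeff t| ≤
        D / c ^ 2 := by
    intro t ht
    have htm := Nat.lt_succ_iff.1 (mem_range.1 ht)
    rw [coeff_sub, coeff_scaledPoly _ htm, scaledCoeff_C_inv_pow_mul_comp p hcpos.ne' htm]
    rcases t with _ | _ | t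
    · simpa [h0] using hD0
    · simpa [h1 htm, coeff_one] using hD0
    · have hcoeff : (1 + C (μ / c) * X).coeff (t + 2) = 0 := by simp [coeff_one]
      rw [hcoeff, sub_zero, abs_div, abs_of_pos (pow_pos hcpos _)]
      exact div_le_div₀ ((abs_nonneg _).trans (hD _ htm)) (hD _ htm) (by positivity)
        (pow_le_pow_right₀ hc (by omega))
  calc _ ≤ ∑ _t ∈ range (m + 1), D / c ^ 2 := sum_le_sum hterm
    _ = (m + 1) * D / c ^ 2 := by rw [sum_const, card_range, nsmul_eq_mul]; push_cast; ring

theorem tendsto_scaledCoeff_boxplusList_rescale {p : ℕ → ℝ[X]} {μ D : ℝ}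
    (hdeg : ∀ i, (p i).natDegree ≤ m) (h0 : ∀ i, scaledCoeff m (p i) 0 = 1)
    (h1 : ∀ i, 0 < m → scaledCoeff m (p i) 1 = μ) (hD : ∀ i, ∀ k ≤ m, |scaledCoeff m (p i) k| ≤ D)
    {k : ℕ} (hk : k ≤ m) :
    Tendsto (fun n : ℕ => scaledCoeff m (boxplusList m ((List.range n).map fun i =>
        C (((n : ℝ) ^ m)⁻¹) * ((p (i + 1)).comp (C (n : ℝ) * X)))) k) atTop
      (nhds (μ ^ k / k.factorial)) := by
  have hqdeg (n : ℕ) : ∀ f ∈ (List.range n).map fun i =>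
      C (((n : ℝ) ^ m)⁻¹) * ((p (i + 1)).comp (C (n : ℝ) * X)), f.natDegree ≤ m := by
    intro f hf
    obtain ⟨i, _, rfl⟩ := List.mem_map.1 hf
    exact natDegree_C_mul_comp_C_mul_X_le _ _ (hdeg (i + 1))
  simp_rw [scaledCoeff_boxplusList (hqdeg _) hk, List.map_map]
  exact tendsto_coeff_list_prod_of_truncNorm_sub_le (E := (m + 1) * D)
    (fun n hn i => truncNorm_scaledPoly_rescale_sub_le (h0 (i + 1)) (h1 (i + 1)) (hD (i + 1))
      (by exact_mod_cast hn)) (Nat.lt_succ_of_le hk)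

end scaledCoeff

end Polynomial

/-- **Finite free law of large numbers.** Let `p_1, p_2, …` be monic real-rooted real
polynomials of degree `m` whose roots sum to `mμ` and whose roots have sum of squares at
most `mC`. With `q_{i,n}(x) = n^{-m} p_i(n x)` and
`r_n = [q_{1,n} ⊞_m ⋯ ⊞_m q_{n,n}]`, each coefficient of `r_n` converges to the
corresponding coefficient of `(x - μ)^m`. -/
theorem finite_free_law_of_large_numbers (m : ℕ) (μ Cbd : ℝ) (p : ℕ → ℝ[X])
    (hmon : ∀ i, (p i).Monic) (hdeg : ∀ i, (p i).natDegree = m)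
    (hreal : ∀ i, Multiset.card (p i).roots = m)
    (hsum : ∀ i, (p i).roots.sum = m * μ)
    (hsq : ∀ i, ((p i).roots.map fun r => r ^ 2).sum ≤ m * Cbd) :
    ∀ j : ℕ, j ≤ m →
      Filter.Tendsto
        (fun n : ℕ =>
          (boxplusList m
            ((List.range n).map fun i =>
              C (((n : ℝ) ^ m)⁻¹) *
                ((p (i + 1)).comp (C (n : ℝ) * X)))).coeff j)
        Filter.atTop
        (nhds ((((X : ℝ[X]) - C μ) ^ m).coeff j)) := by
  intro j hj
  have hsplit (i : ℕ) : (p i).Splits := splits_iff_card_roots.2 ((hreal i).trans (hdeg i).symm)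
  have hD (i : ℕ) : ∀ k ≤ m, |scaledCoeff m (p i) k| ≤ (1 + √(m * Cbd)) ^ m := fun k _ =>
    (abs_scaledCoeff_le _ _).trans <| (abs_coeff_le_truncNorm (N := m + 1) _ (by omega)).trans <|
      (truncNorm_le_of_abs_roots_le (hmon i) (hsplit i) fun _ hr =>
        (Multiset.abs_le_sqrt_sum_sq hr).trans (Real.sqrt_le_sqrt (hsq i))).trans_eq
        (by rw [hdeg i])
  have h1 (i : ℕ) (hm : 0 < m) : scaledCoeff m (p i) 1 = μ := by
    rw [(hsplit i).scaledCoeff_one (hmon i) (hdeg i) hm, hsum i]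
    field_simp [show (m : ℝ) ≠ 0 by exact_mod_cast hm.ne']
  have hlim := tendsto_scaledCoeff_boxplusList_rescale (fun i => (hdeg i).le)
    (fun i => (hmon i).scaledCoeff_zero (hdeg i)) h1 hD (Nat.sub_le m j)
  rw [coeff_eq_scaledCoeff _ hj, scaledCoeff_X_sub_C_pow μ (Nat.sub_le m j)]
  simp only [coeff_eq_scaledCoeff _ hj]
  exact hlim.const_mul _
end

section
/- (Finite free Poisson limit theorem.) Let m and k be positive integers and let p(x) = x^{m−1}(x − 1). Then the k-fold symmetric additive convolution of p with itself satisfies [p ⊞_m p ⊞_m ⋯ ⊞_m p] (k copies of p) = m!·(−m)^{−m} · ∑_{i=0}^m ((−mx)^i / i!) · C(k, m−i), i.e., it equals m!(−m)^{−m} L_m^{(k−m)}(mx), where L_n^{(α)}(x) = ∑_{i=0}^n ((−x)^i / i!) C(n+α, n−i) is the associated Laguerre polynomial and C(a,b) the binomial coefficient (with C(k, m−i) = 0 when m−i > k). -/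
/-!
Writing `D` for differentiation, `x^{m-1}(x-1) = (1 - D/m) x^m`. The convolution `⊞_m` is linear
and commutes with `D` in its first argument, and `x^m ⊞_m q = q` when `deg q ≤ m`, so convolving
with `p` acts on polynomials of degree at most `m` as the operator `1 - D/m`. The `k`-fold
convolution is therefore `(1 - D/m)^k x^m = ∑_j C(k, j) (-1/m)^j D^j x^m`, and
`D^j x^m = m!/(m-j)! · x^{m-j}` turns this into the Laguerre form.
-/

open Polynomial

/-- The `k`-fold iterated symmetric additive convolution of `p` with itself
(`x^m` is the identity element for `⊞_m` on monic degree-`m` polynomials, so folding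
`k` copies of `p` over `x^m` gives exactly the `k`-fold convolution). -/
noncomputable def boxplusPow (m k : ℕ) (p : ℝ[X]) : ℝ[X] :=
  (List.replicate k p).foldr (boxplus m) ((X : ℝ[X]) ^ m)

open Finset

theorem Polynomial.iterate_derivative_eval_zero_s19 {R : Type*} [Semiring R] (q : R[X]) (j : ℕ) :
    (derivative^[j] q).eval 0 = j.factorial * q.coeff j := by
  rw [← coeff_zero_eq_eval_zero, coeff_iterate_derivative, zero_add, Nat.descFactorial_self,
    nsmul_eq_mul]

theorem boxplus_X_pow_left {m : ℕ} {q : ℝ[X]} (hq : q.natDegree ≤ m) :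
    boxplus m (X ^ m) q = q := by
  calc boxplus m (X ^ m) q = ∑ i ∈ range (m + 1), C (q.coeff (m - i)) * X ^ (m - i) := by
        rw [boxplus, smul_sum]
        refine sum_congr rfl fun i hi => ?_
        have hfac : ((m - i).factorial * m.descFactorial i : ℝ) = m.factorial := by
          exact_mod_cast Nat.factorial_mul_descFactorial (mem_range_succ_iff.1 hi)
        rw [iterate_derivative_eval_zero_s19, iterate_derivative_X_pow_eq_C_mul, ← mul_assoc,
          ← C_mul, smul_eq_C_mul, ← mul_assoc, ← C_mul]
        congr 2
        rw [mul_right_comm, hfac, inv_mul_cancel_left₀ (by positivity)]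
    _ = ∑ j ∈ range (m + 1), C (q.coeff j) * X ^ j :=
        sum_range_reflect (fun j => C (q.coeff j) * X ^ j) (m + 1)
    _ = q := (q.as_sum_range_C_mul_X_pow' (Nat.lt_succ_of_le hq)).symm

theorem boxplus_one_sub_smul_derivative_left (m : ℕ) (c : ℝ) (p q : ℝ[X]) :
    boxplus m ((1 - c • derivative : Module.End ℝ ℝ[X]) p) q =
      (1 - c • derivative : Module.End ℝ ℝ[X]) (boxplus m p q) := by
  simp only [boxplus, LinearMap.sub_apply, Module.End.one_apply, LinearMap.smul_apply,
    iterate_map_sub, iterate_derivative_smul, mul_sub, Algebra.mul_smul_comm, sum_sub_distrib,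
    smul_sub, map_smul, map_sum, derivative_mul, derivative_C, zero_mul, zero_add,
    ← Function.iterate_succ_apply' derivative, Function.iterate_succ_apply]

theorem natDegree_boxplus_le (m : ℕ) (p q : ℝ[X]) : (boxplus m p q).natDegree ≤ p.natDegree :=
  (natDegree_smul_le _ _).trans <| natDegree_sum_le_of_forall_le _ _ fun _ _ =>
    (natDegree_C_mul_le _ _).trans <| (natDegree_iterate_derivative _ _).trans (Nat.sub_le _ _)

theorem natDegree_boxplusPow_le {m : ℕ} (k : ℕ) {p : ℝ[X]} (hp : p.natDegree ≤ m) :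
    (boxplusPow m k p).natDegree ≤ m := by
  cases k with
  | zero => exact natDegree_X_pow_le m
  | succ k => exact (natDegree_boxplus_le m p _).trans hp

theorem natDegree_one_sub_smul_derivative_apply_le (c : ℝ) (p : ℝ[X]) :
    ((1 - c • derivative : Module.End ℝ ℝ[X]) p).natDegree ≤ p.natDegree :=
  (natDegree_sub_le _ _).trans <| max_le le_rfl <|
    (natDegree_smul_le _ _).trans <| (natDegree_derivative_le p).trans (Nat.sub_le _ _)

theorem boxplusPow_one_sub_smul_derivative_X_pow (m k : ℕ) (c : ℝ) :
    boxplusPow m k ((1 - c • derivative : Module.End ℝ ℝ[X]) (X ^ m)) =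
      ((1 - c • derivative : Module.End ℝ ℝ[X]) ^ k) (X ^ m) := by
  induction k with
  | zero => rfl
  | succ k ih =>
    have hdeg := (natDegree_one_sub_smul_derivative_apply_le c (X ^ m)).trans
      (natDegree_X_pow_le m)
    change boxplus m _ (boxplusPow m k _) = _
    rw [boxplus_one_sub_smul_derivative_left, boxplus_X_pow_left (natDegree_boxplusPow_le k hdeg),
      ih, pow_succ', Module.End.mul_apply]

theorem one_sub_smul_derivative_pow_apply {m : ℕ} (c : ℝ) (k : ℕ) {q : ℝ[X]}
    (hq : q.natDegree ≤ m) :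
    ((1 - c • derivative : Module.End ℝ ℝ[X]) ^ k) q =
      ∑ j ∈ range (m + 1), C (k.choose j * (-c) ^ j) * derivative^[j] q := by
  set f : ℕ → ℝ[X] := fun j => C (k.choose j * (-c) ^ j) * derivative^[j] q
  have hbinom : (1 - c • derivative : Module.End ℝ ℝ[X]) = (-c) • derivative + 1 := by
    module
  calc ((1 - c • derivative : Module.End ℝ ℝ[X]) ^ k) q = ∑ j ∈ range (k + 1), f j := by
        rw [hbinom, (Commute.one_right _).add_pow, LinearMap.sum_apply]
        refine sum_congr rfl fun j _ => ?_
        rw [one_pow, mul_one, Module.End.mul_apply, Module.End.natCast_apply, _root_.smul_pow,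
          LinearMap.smul_apply, Module.End.pow_apply, iterate_map_nsmul]
        simp only [f, smul_eq_C_mul, nsmul_eq_mul, map_mul, map_natCast]
        ring
    _ = ∑ j ∈ range (k + m + 1), f j :=
        sum_subset (range_subset_range.2 (by omega)) fun j _ hj => by
          simp [f, Nat.choose_eq_zero_of_lt (show k < j by simpa using hj)]
    _ = ∑ j ∈ range (m + 1), f j :=
        (sum_subset (range_subset_range.2 (by omega)) fun j _ hj => by
          simp [f, iterate_derivative_eq_zero (show q.natDegree < j by simp at hj; omega)]).symm

theorem finite_free_poisson_limit_general (m k : ℕ) (hm : 0 < m) :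
    boxplusPow m k ((X : ℝ[X]) ^ (m - 1) * ((X : ℝ[X]) - 1)) =
      C ((m.factorial : ℝ) * ((-(m : ℝ)) ^ m)⁻¹) *
        ∑ i ∈ Finset.range (m + 1),
          C ((k.choose (m - i) : ℝ) / (i.factorial : ℝ)) *
            (C (-(m : ℝ)) * (X : ℝ[X])) ^ i := by
  have hp : (X : ℝ[X]) ^ (m - 1) * (X - 1) =
      (1 - (m : ℝ)⁻¹ • derivative : Module.End ℝ ℝ[X]) (X ^ m) := by
    rw [LinearMap.sub_apply, Module.End.one_apply, LinearMap.smul_apply, derivative_X_pow,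
      smul_eq_C_mul, ← mul_assoc, ← C_mul, inv_mul_cancel₀ (by positivity), C_1, one_mul,
      mul_sub, mul_one, ← pow_succ, Nat.sub_add_cancel hm]
  rw [hp, boxplusPow_one_sub_smul_derivative_X_pow,
    one_sub_smul_derivative_pow_apply _ _ (natDegree_X_pow_le m), mul_sum, ← sum_range_reflect]
  refine sum_congr rfl fun i hi => ?_
  have him : i ≤ m := mem_range_succ_iff.1 hi
  have hfac : (i.factorial * m.descFactorial (m - i) : ℝ) = m.factorial := by
    exact_mod_cast (Nat.sub_sub_self him ▸ Nat.factorial_mul_descFactorial (Nat.sub_le m i))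
  have hpow : (-(m : ℝ)) ^ m = (-(m : ℝ)) ^ i * (-(m : ℝ)) ^ (m - i) := by
    rw [← pow_add, Nat.add_sub_cancel' him]
  rw [iterate_derivative_X_pow_eq_C_mul, Nat.add_sub_cancel, Nat.sub_sub_self him, mul_pow,
    ← C_pow]
  simp only [← mul_assoc, ← C_mul]
  congr 2
  have hm0 : -(m : ℝ) ≠ 0 := by simpa using hm.ne'
  rw [neg_inv, inv_pow, ← hfac, hpow]
  field_simp

/-- **Finite free Poisson limit theorem.** For positive integers `m`, `k` and
`p(x) = x^{m-1}(x-1)`, the `k`-fold symmetric additive convolution of `p` with itself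
equals `m!·(-m)^{-m} ∑_{i=0}^m ((-mx)^i / i!) C(k, m-i)`, i.e.
`m!(-m)^{-m} L_m^{(k-m)}(mx)` where `L` is the associated Laguerre polynomial. -/
theorem finite_free_poisson_limit (m k : ℕ) (hm : 0 < m) (hk : 0 < k) :
    boxplusPow m k ((X : ℝ[X]) ^ (m - 1) * ((X : ℝ[X]) - 1)) =
      C ((m.factorial : ℝ) * ((-(m : ℝ)) ^ m)⁻¹) *
        ∑ i ∈ Finset.range (m + 1),
          C ((k.choose (m - i) : ℝ) / (i.factorial : ℝ)) *
            (C (-(m : ℝ)) * (X : ℝ[X])) ^ i :=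
  finite_free_poisson_limit_general m k hm
end
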